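/- Let X be a complex Banach space, T a bounded linear operator on X with ‖T‖ ≤ 1, and P a bounded projection (P ∘ P = P) on X with ‖P‖ ≤ 1 and PT = TP = P. Then r(T − P) = lim_{n→∞} (δ_P(Tⁿ))^{1/n} = inf_{n ≥ 1} (δ_P(Tⁿ))^{1/n}. -/

import Mathlib

open Filter Topology

/-- The generalized Dobrushin ergodicity coefficient of `T` with respect to `P`:
`δ_P(T) = sup {‖T x‖ : P x = 0, ‖x‖ ≤ 1}`. -/
noncomputable def dobrushinCoeff {X : Type*} [NormedAddCommGroup X] [NormedSpace ℂ X]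
    (P T : X →L[ℂ] X) : ℝ :=
  sSup {r : ℝ | ∃ x : X, P x = 0 ∧ ‖x‖ ≤ 1 ∧ r = ‖T x‖}

/-!
Put `A = T - P`. From `P² = P` and `PT = TP = P` one gets `Aⁿ = Tⁿ - P = Tⁿ (1 - P)` for `n ≥ 1`,
and `1 - P` maps into `ker P`, so `δ_P(Tⁿ) ≤ ‖Aⁿ‖ ≤ ‖1 - P‖ δ_P(Tⁿ)`. By Gelfand's formula the
upper bound gives `limsup δ_P(Tⁿ)^{1/n} ≤ r(A)`. For the lower bound, `T` preserves `ker P`, so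
`δ_P` is submultiplicative along powers of `T`: `r(A)^{nk} ≤ ‖A^{nk}‖ ≤ ‖1 - P‖ δ_P(Tⁿ)^k` for all
`k ≥ 1`, which forces `r(A)ⁿ ≤ δ_P(Tⁿ)`. Thus `r(A)` is a lower bound of the sequence as well as
its limit, hence its infimum.
-/

open scoped ENNReal

theorem le_of_forall_pow_le_mul_pow {a b C : ℝ} (hb : 0 ≤ b)
    (h : ∀ k, k ≠ 0 → a ^ k ≤ C * b ^ k) : a ≤ b := by
  by_contra! hba
  rcases hb.eq_or_lt with rfl | hb
  · have := h 1 one_ne_zero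
    simp only [pow_one, mul_zero] at this
    linarith
  · obtain ⟨k, hk⟩ := pow_unbounded_of_one_lt C ((one_lt_div hb).mpr hba)
    have hk' : C < (a / b) ^ (k + 1) :=
      hk.trans_le (pow_le_pow_right₀ ((one_lt_div hb).mpr hba).le k.le_succ)
    rw [div_pow, lt_div_iff₀ (pow_pos hb _)] at hk'
    linarith [h (k + 1) k.succ_ne_zero]

theorem pow_mul_eq_of_mul_eq {M : Type*} [Monoid M] {a b : M} (h : a * b = b) (n : ℕ) :
    a ^ n * b = b := by
  induction n with
  | zero => rw [pow_zero, one_mul]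
  | succ n ih => rw [pow_succ', mul_assoc, ih, h]

theorem mul_pow_eq_of_mul_eq {M : Type*} [Monoid M] {a b : M} (h : b * a = b) (n : ℕ) :
    b * a ^ n = b := by
  induction n with
  | zero => rw [pow_zero, mul_one]
  | succ n ih => rw [pow_succ, ← mul_assoc, ih, h]

theorem sub_pow_of_mul_eq {R : Type*} [Ring R] {t p : R} (hpp : p * p = p)
    (hpt : p * t = p) (htp : t * p = p) {n : ℕ} (hn : n ≠ 0) : (t - p) ^ n = t ^ n - p := by
  obtain ⟨n, rfl⟩ := Nat.exists_eq_add_one_of_ne_zero hn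
  induction n with
  | zero => simp
  | succ n ih =>
    rw [pow_succ, ih n.succ_ne_zero, sub_mul, mul_sub, mul_sub, pow_mul_eq_of_mul_eq htp, hpt,
      hpp, ← pow_succ]
    abel

section SpectralRadius

variable {𝕜 A : Type*} [NormedField 𝕜] [NormedRing A] [NormedAlgebra 𝕜 A] [CompleteSpace A]

theorem spectralRadius_pow_le_nnnorm_pow (h1 : ‖(1 : A)‖₊ ≤ 1) (a : A) (n : ℕ) :
    spectralRadius 𝕜 a ^ (n + 1) ≤ ‖a ^ (n + 1)‖₊ := by
  have hn : (0 : ℝ) < (n + 1 : ℕ) := by positivity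
  have h := spectrum.spectralRadius_le_pow_nnnorm_pow_one_div 𝕜 a n
  have h1' : ((‖(1 : A)‖₊ : ℝ≥0∞)) ^ (1 / (n + 1) : ℝ) ≤ 1 :=
    ENNReal.rpow_le_one (by exact_mod_cast h1) (by positivity)
  have h' := h.trans (mul_le_of_le_one_right' h1')
  rw [one_div, ← Nat.cast_succ, ENNReal.le_rpow_inv_iff hn, ENNReal.rpow_natCast] at h'
  exact h'

theorem spectralRadius_ne_top (a : A) : spectralRadius 𝕜 a ≠ ∞ :=
  ne_top_of_le_ne_top (by finiteness) (spectrum.spectralRadius_le_pow_nnnorm_pow_one_div 𝕜 a 0)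

theorem spectralRadius_toReal_pow_le_norm_pow (h1 : ‖(1 : A)‖ ≤ 1) (a : A) {n : ℕ}
    (hn : n ≠ 0) : (spectralRadius 𝕜 a).toReal ^ n ≤ ‖a ^ n‖ := by
  obtain ⟨n, rfl⟩ := Nat.exists_eq_add_one_of_ne_zero hn
  have h := ENNReal.toReal_mono ENNReal.coe_ne_top
    (spectralRadius_pow_le_nnnorm_pow (𝕜 := 𝕜) (by exact_mod_cast h1) a n)
  rwa [ENNReal.toReal_pow, ENNReal.coe_toReal, coe_nnnorm] at h

end SpectralRadius

theorem tendsto_norm_pow_rpow_spectralRadius_toReal {A : Type*} [NormedRing A]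
    [NormedAlgebra ℂ A] [CompleteSpace A] (a : A) :
    Tendsto (fun n : ℕ => ‖a ^ n‖ ^ (1 / n : ℝ)) atTop (𝓝 (spectralRadius ℂ a).toReal) := by
  refine ((ENNReal.tendsto_toReal (spectralRadius_ne_top a)).comp
    (spectrum.pow_norm_pow_one_div_tendsto_nhds_spectralRadius a)).congr fun n => ?_
  exact ENNReal.toReal_ofReal (by positivity)

section DobrushinCoeff

variable {X : Type*} [NormedAddCommGroup X] [NormedSpace ℂ X] {P Q R : X →L[ℂ] X}

theorem dobrushinCoeff_bddAbove (P Q : X →L[ℂ] X) :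
    BddAbove {r : ℝ | ∃ x : X, P x = 0 ∧ ‖x‖ ≤ 1 ∧ r = ‖Q x‖} := by
  refine ⟨‖Q‖, ?_⟩
  rintro _ ⟨x, -, hx, rfl⟩
  exact Q.le_of_opNorm_le le_rfl x |>.trans (mul_le_of_le_one_right (norm_nonneg Q) hx)

theorem dobrushinCoeff_nonneg (P Q : X →L[ℂ] X) : 0 ≤ dobrushinCoeff P Q :=
  le_csSup (dobrushinCoeff_bddAbove P Q) ⟨0, map_zero P, by simp, by simp⟩

theorem dobrushinCoeff_le_of_norm_apply_le {C : ℝ} (hC : 0 ≤ C)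
    (h : ∀ x, P x = 0 → ‖Q x‖ ≤ C * ‖x‖) : dobrushinCoeff P Q ≤ C := by
  refine csSup_le ⟨_, 0, map_zero P, by simp, rfl⟩ ?_
  rintro _ ⟨x, hx, hx1, rfl⟩
  exact (h x hx).trans (mul_le_of_le_one_right hC hx1)

theorem norm_apply_le_dobrushinCoeff_mul {x : X} (hx : P x = 0) :
    ‖Q x‖ ≤ dobrushinCoeff P Q * ‖x‖ := by
  rcases eq_or_ne x 0 with rfl | hx0
  · simp
  have hmem : ‖Q ((‖x‖⁻¹ : ℂ) • x)‖ ≤ dobrushinCoeff P Q :=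
    le_csSup (dobrushinCoeff_bddAbove P Q)
      ⟨_, by rw [map_smul, hx, smul_zero], (norm_smul_inv_norm hx0).le, rfl⟩
  rw [map_smul, norm_smul, norm_inv, Complex.norm_real, norm_norm,
    inv_mul_le_iff₀ (norm_pos_iff.mpr hx0)] at hmem
  linarith

theorem dobrushinCoeff_le_norm_sub (P Q : X →L[ℂ] X) : dobrushinCoeff P Q ≤ ‖Q - P‖ :=
  dobrushinCoeff_le_of_norm_apply_le (norm_nonneg _) fun x hx => by
    simpa [hx] using (Q - P).le_opNorm x

theorem dobrushinCoeff_one_le (P : X →L[ℂ] X) : dobrushinCoeff P 1 ≤ 1 :=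
  dobrushinCoeff_le_of_norm_apply_le zero_le_one fun x _ => by simp

theorem dobrushinCoeff_mul_le (hR : P * R = P) :
    dobrushinCoeff P (Q * R) ≤ dobrushinCoeff P Q * dobrushinCoeff P R := by
  refine dobrushinCoeff_le_of_norm_apply_le
    (mul_nonneg (dobrushinCoeff_nonneg P Q) (dobrushinCoeff_nonneg P R)) fun x hx => ?_
  have hRx : P (R x) = 0 := by rw [← mul_apply_eq_comp, hR, hx]
  calc ‖(Q * R) x‖ ≤ dobrushinCoeff P Q * ‖R x‖ := norm_apply_le_dobrushinCoeff_mul hRx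
    _ ≤ dobrushinCoeff P Q * (dobrushinCoeff P R * ‖x‖) :=
      mul_le_mul_of_nonneg_left (norm_apply_le_dobrushinCoeff_mul hx) (dobrushinCoeff_nonneg P Q)
    _ = _ := (mul_assoc _ _ _).symm

theorem dobrushinCoeff_pow_le (hQ : P * Q = P) (k : ℕ) :
    dobrushinCoeff P (Q ^ k) ≤ dobrushinCoeff P Q ^ k := by
  induction k with
  | zero => simpa using dobrushinCoeff_one_le P
  | succ k ih =>
    rw [pow_succ, pow_succ]
    exact (dobrushinCoeff_mul_le hQ).trans
      (mul_le_mul_of_nonneg_right ih (dobrushinCoeff_nonneg P Q))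

theorem norm_sub_le_dobrushinCoeff_mul (hPP : P * P = P) (hQP : Q * P = P) :
    ‖Q - P‖ ≤ dobrushinCoeff P Q * ‖1 - P‖ := by
  refine ContinuousLinearMap.opNorm_le_bound _
    (mul_nonneg (dobrushinCoeff_nonneg P Q) (norm_nonneg _)) fun x => ?_
  have hfactor : Q - P = Q * (1 - P) := by rw [mul_sub, mul_one, hQP]
  have hker : P ((1 - P) x) = 0 := by
    rw [← mul_apply_eq_comp, mul_sub, mul_one, hPP, sub_self, zero_apply]
  calc ‖(Q - P) x‖ = ‖Q ((1 - P) x)‖ := by rw [hfactor, mul_apply_eq_comp]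
    _ ≤ dobrushinCoeff P Q * ‖(1 - P) x‖ := norm_apply_le_dobrushinCoeff_mul hker
    _ ≤ dobrushinCoeff P Q * (‖1 - P‖ * ‖x‖) :=
      mul_le_mul_of_nonneg_left ((1 - P).le_opNorm x) (dobrushinCoeff_nonneg P Q)
    _ = _ := (mul_assoc _ _ _).symm

end DobrushinCoeff

theorem spectralRadius_sub_toReal_pow_le_dobrushinCoeff_pow {X : Type*} [NormedAddCommGroup X]
    [NormedSpace ℂ X] [CompleteSpace X] {T P : X →L[ℂ] X} (hPP : P * P = P)
    (hPT : P * T = P) (hTP : T * P = P) {n : ℕ} (hn : n ≠ 0) :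
    (spectralRadius ℂ (T - P)).toReal ^ n ≤ dobrushinCoeff P (T ^ n) := by
  refine le_of_forall_pow_le_mul_pow (C := ‖1 - P‖) (dobrushinCoeff_nonneg P _) fun k hk => ?_
  calc ((spectralRadius ℂ (T - P)).toReal ^ n) ^ k
      = (spectralRadius ℂ (T - P)).toReal ^ (n * k) := (pow_mul _ _ _).symm
    _ ≤ ‖(T - P) ^ (n * k)‖ :=
      spectralRadius_toReal_pow_le_norm_pow ContinuousLinearMap.norm_id_le _ (mul_ne_zero hn hk)
    _ = ‖(T ^ n) ^ k - P‖ := by rw [sub_pow_of_mul_eq hPP hPT hTP (mul_ne_zero hn hk), pow_mul]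
    _ ≤ dobrushinCoeff P ((T ^ n) ^ k) * ‖1 - P‖ :=
      norm_sub_le_dobrushinCoeff_mul hPP (pow_mul_eq_of_mul_eq (pow_mul_eq_of_mul_eq hTP n) k)
    _ ≤ dobrushinCoeff P (T ^ n) ^ k * ‖1 - P‖ := by
      gcongr
      exact dobrushinCoeff_pow_le (mul_pow_eq_of_mul_eq hPT n) k
    _ = ‖1 - P‖ * dobrushinCoeff P (T ^ n) ^ k := mul_comm _ _

theorem stmt6_general {X : Type*} [NormedAddCommGroup X] [NormedSpace ℂ X] [CompleteSpace X]
    (T P : X →L[ℂ] X)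
    (hProj : P.comp P = P) (hPT : P.comp T = P) (hTP : T.comp P = P) :
    Tendsto (fun n : ℕ => dobrushinCoeff P (T ^ n) ^ ((1 : ℝ) / (n : ℝ))) atTop
      (𝓝 ((spectralRadius ℂ (T - P)).toReal)) ∧
    (spectralRadius ℂ (T - P)).toReal =
      ⨅ n : {m : ℕ // 1 ≤ m}, dobrushinCoeff P (T ^ (n : ℕ)) ^ ((1 : ℝ) / ((n : ℕ) : ℝ)) := by
  set r := (spectralRadius ℂ (T - P)).toReal
  set f : ℕ → ℝ := fun n => dobrushinCoeff P (T ^ n) ^ ((1 : ℝ) / (n : ℝ))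
  have hlower : ∀ n, 1 ≤ n → r ≤ f n := fun n hn => by
    dsimp only [f]
    rw [one_div, Real.le_rpow_inv_iff_of_pos ENNReal.toReal_nonneg (dobrushinCoeff_nonneg P _)
      (by positivity), Real.rpow_natCast]
    exact spectralRadius_sub_toReal_pow_le_dobrushinCoeff_pow hProj hPT hTP (by omega)
  have hupper : ∀ n, 1 ≤ n → f n ≤ ‖(T - P) ^ n‖ ^ ((1 : ℝ) / (n : ℝ)) := fun n hn => by
    dsimp only [f]
    rw [sub_pow_of_mul_eq hProj hPT hTP (by omega)]
    exact Real.rpow_le_rpow (dobrushinCoeff_nonneg P _) (dobrushinCoeff_le_norm_sub P _)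
      (by positivity)
  have htendsto : Tendsto f atTop (𝓝 r) :=
    tendsto_of_tendsto_of_tendsto_of_le_of_le' tendsto_const_nhds
      (tendsto_norm_pow_rpow_spectralRadius_toReal (T - P))
      (eventually_atTop.2 ⟨1, hlower⟩) (eventually_atTop.2 ⟨1, hupper⟩)
  have hbdd : BddBelow (Set.range fun n : {m : ℕ // 1 ≤ m} => f n) :=
    ⟨r, by rintro _ ⟨n, rfl⟩; exact hlower n n.2⟩
  exact ⟨htendsto, le_antisymm (le_ciInf fun n => hlower n n.2)
    (ge_of_tendsto htendsto (eventually_atTop.2 ⟨1, fun n hn => ciInf_le hbdd ⟨n, hn⟩⟩))⟩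

theorem stmt6 {X : Type*} [NormedAddCommGroup X] [NormedSpace ℂ X] [CompleteSpace X]
    (T P : X →L[ℂ] X) (hT : ‖T‖ ≤ 1) (hPnorm : ‖P‖ ≤ 1)
    (hProj : P.comp P = P) (hPT : P.comp T = P) (hTP : T.comp P = P) :
    Tendsto (fun n : ℕ => dobrushinCoeff P (T ^ n) ^ ((1 : ℝ) / (n : ℝ))) atTop
      (𝓝 ((spectralRadius ℂ (T - P)).toReal)) ∧
    (spectralRadius ℂ (T - P)).toReal =
      ⨅ n : {m : ℕ // 1 ≤ m}, dobrushinCoeff P (T ^ (n : ℕ)) ^ ((1 : ℝ) / ((n : ℕ) : ℝ)) :=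
  stmt6_general T P hProj hPT hTP
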